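/- arXiv:2107.06960 — 5 statements merged into one kernel-verified Lean document; each statement's English description precedes it below -/
import Mathlib

section
/- Let A be a Dedekind ring and F a formal power series in A[[X]] that is rational, i.e., F = p/q for some polynomials p, q in A[X]. Then there exist polynomials P, Q in A[X] such that F = P/Q, where P and Q are relatively prime and Q(0) = 1. -/
open Polynomial

open scoped PowerSeries

/-!
Over the fraction field `K` of `A`, cancelling a gcd gives a reduced form `F = P₀ / Q₀` with
`Q₀(0) = 1`, and `Q₀` divides every denominator of `F`. Over `A` itself, `F` lies in the module
of series `r / q` with `deg r < N` (`N` large); truncation embeds it in `A^N`, so it is finitely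
generated since `A` is Noetherian, and it is stable under the backward shift. Cayley–Hamilton
gives a monic `f ∈ A[X]` with `f(shift) F = 0`, which says that `F · reverse f` is a polynomial.
Hence `Q₀ ∣ reverse f`, so `reverse Q₀` is a monic factor of `f` and has coefficients in `A`
because `A` is integrally closed. Then `F · Q₀` has coefficients in `A` as well, and coprimality
descends from `K[X]` to `A[X]` because `Q₀(0) = 1` makes `Q₀` primitive.
-/

lemma Module.End.aeval_restrict_coe_apply {R M : Type*} [CommRing R] [AddCommGroup M]
    [Module R M] {f : Module.End R M} {p : Submodule R M} (h : ∀ x ∈ p, f x ∈ p) (r : R[X])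
    (x : p) :
    (aeval (f.restrict h) r x : M) = aeval f r x := by
  induction r using Polynomial.induction_on' with
  | add r s hr hs => simp [hr, hs]
  | monomial n a =>
    simp only [← C_mul_X_pow_eq_monomial, map_mul, aeval_C, aeval_X_pow, Module.End.mul_apply,
      Module.End.pow_restrict n h, Module.algebraMap_end_apply, LinearMap.coe_restrict_apply,
      Submodule.coe_smul]

namespace PowerSeries

variable {A : Type*} [CommRing A]

noncomputable def shift : A⟦X⟧ →ₗ[A] A⟦X⟧ where
  toFun f := mk fun n => coeff (n + 1) f
  map_add' f g := by ext; simp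
  map_smul' a f := by ext; simp

@[simp]
lemma coeff_shift (f : A⟦X⟧) (n : ℕ) : coeff n (shift f) = coeff (n + 1) f := by
  simp [shift]

lemma coeff_shift_pow (f : A⟦X⟧) (i n : ℕ) : coeff n ((shift ^ i) f) = coeff (n + i) f := by
  induction i generalizing n with
  | zero => rfl
  | succ i ih => rw [pow_succ', Module.End.mul_apply, coeff_shift, ih, add_right_comm, add_assoc]

lemma coeff_mul_reflect (f : A⟦X⟧) {m : ℕ} {r : A[X]} (hr : r.natDegree ≤ m) {n : ℕ}
    (hn : m ≤ n) :
    coeff n (f * (reflect m r : A⟦X⟧)) = coeff (n - m) (Polynomial.aeval shift r f) := by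
  refine Polynomial.induction_with_natDegree_le
    (fun r => coeff n (f * (reflect m r : A⟦X⟧)) = coeff (n - m) (Polynomial.aeval shift r f))
    m (by simp) (fun i a _ hi => ?_) (fun g h _ _ hg hh => ?_) r hr
  · rw [reflect_C_mul_X_pow, revAt_le hi, mul_comm, Polynomial.coe_mul, Polynomial.coe_C,
      Polynomial.coe_pow, Polynomial.coe_X, mul_assoc, coeff_C_mul, coeff_X_pow_mul',
      if_pos (by omega)]
    simp only [map_mul, aeval_C, aeval_X_pow, Module.End.mul_apply, Module.algebraMap_end_apply,
      map_smul, coeff_shift_pow, smul_eq_mul, Nat.sub_sub_right _ hi, Nat.sub_add_comm hn]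
  · rw [reflect_add, Polynomial.coe_add, mul_add, map_add, hg, hh, map_add,
      LinearMap.add_apply, map_add]

lemma eq_coe_trunc_of_coeff_eq_zero {f : A⟦X⟧} {N : ℕ}
    (h : ∀ n, N ≤ n → coeff n f = 0) : f = trunc N f := by
  ext n
  rw [Polynomial.coeff_coe, coeff_trunc]
  split_ifs with hn
  · rfl
  · exact h n (not_lt.mp hn)

/-- The fractions `r / q` with `deg r < N`. -/
def fractionsDegreeLT (q : A[X]) (N : ℕ) : Submodule A A⟦X⟧ where
  carrier := {f | ∀ n, N ≤ n → coeff n (f * (q : A⟦X⟧)) = 0}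
  add_mem' hf hg n hn := by rw [add_mul, map_add, hf n hn, hg n hn, add_zero]
  zero_mem' n _ := by rw [zero_mul, map_zero]
  smul_mem' a f hf n hn := by rw [smul_mul_assoc, map_smul, hf n hn, smul_zero]

section fractionsDegreeLT

variable {q : A[X]} {N : ℕ}

lemma shift_mem_fractionsDegreeLT (hN : q.natDegree ≤ N) {f : A⟦X⟧}
    (hf : f ∈ fractionsDegreeLT q N) : shift f ∈ fractionsDegreeLT q N := by
  intro n hn
  have h := hf (n + 1) (by omega)
  rw [eq_X_mul_shift_add_const f, add_mul, map_add, mul_assoc, coeff_succ_X_mul, coeff_C_mul,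
    Polynomial.coeff_coe, coeff_eq_zero_of_natDegree_lt (by omega), mul_zero, add_zero] at h
  exact h

lemma eq_zero_of_mem_fractionsDegreeLT [IsDomain A] (hq : q ≠ 0) {f : A⟦X⟧}
    (hf : f ∈ fractionsDegreeLT q N) (h0 : ∀ n < N, coeff n f = 0) : f = 0 := by
  have hdvd : X ^ N ∣ f * (q : A⟦X⟧) := (X_pow_dvd_iff.mpr h0).mul_right _
  have hfq : f * (q : A⟦X⟧) = 0 := ext fun n => by
    rw [map_zero]
    exact if hn : n < N then X_pow_dvd_iff.mp hdvd n hn else hf n (not_lt.mp hn)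
  exact (mul_eq_zero.mp hfq).resolve_right (Polynomial.coe_eq_zero_iff.not.mpr hq)

lemma isNoetherian_fractionsDegreeLT [IsDomain A] [IsNoetherianRing A] (hq : q ≠ 0) :
    IsNoetherian A (fractionsDegreeLT q N) := by
  refine isNoetherian_of_injective
    ((LinearMap.pi fun i : Fin N => coeff (i : ℕ)) ∘ₗ (fractionsDegreeLT q N).subtype)
    ((injective_iff_map_eq_zero _).mpr fun f hf => Subtype.ext ?_)
  exact eq_zero_of_mem_fractionsDegreeLT hq f.2 fun n hn => congr_fun hf ⟨n, hn⟩

end fractionsDegreeLT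

theorem exists_monic_mul_reverse_eq_coe [IsDomain A] [IsNoetherianRing A] {F : A⟦X⟧}
    {p q : A[X]} (hq : q ≠ 0) (hF : F * q = p) :
    ∃ f : A[X], f.Monic ∧ ∃ s : A[X], F * (f.reverse : A⟦X⟧) = s := by
  set N := max (p.natDegree + 1) q.natDegree
  have hS : ∀ g ∈ fractionsDegreeLT q N, shift g ∈ fractionsDegreeLT q N :=
    fun _ => shift_mem_fractionsDegreeLT (le_max_right _ _)
  have hFmem : F ∈ fractionsDegreeLT q N := fun n hn => by
    rw [hF, Polynomial.coeff_coe]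
    exact coeff_eq_zero_of_natDegree_lt (by omega)
  have : IsNoetherian A (fractionsDegreeLT q N) := isNoetherian_fractionsDegreeLT hq
  obtain ⟨f, hf, hfS⟩ := LinearMap.exists_monic_and_aeval_eq_zero A (shift.restrict hS)
  have hfF : Polynomial.aeval shift f F = 0 := by
    rw [← Module.End.aeval_restrict_coe_apply hS f ⟨F, hFmem⟩, hfS]
    rfl
  refine ⟨f, hf, trunc f.natDegree (F * f.reverse),
    eq_coe_trunc_of_coeff_eq_zero fun n hn => ?_⟩
  rw [reverse, coeff_mul_reflect F le_rfl hn, hfF, map_zero]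

theorem exists_isRelPrime_mul_eq_coe {K : Type*} [Field K] {F : K⟦X⟧} {p q : K[X]}
    (hq : q ≠ 0) (hF : F * q = p) :
    ∃ P Q : K[X], IsRelPrime P Q ∧ Q.coeff 0 = 1 ∧ F * Q = P := by
  classical
  obtain ⟨p', q', hp', hq', hunit⟩ := extract_gcd p q
  have hgcd : ((gcd p q : K[X]) : K⟦X⟧) ≠ 0 := by
    rw [Ne, Polynomial.coe_eq_zero_iff, gcd_eq_zero_iff]
    exact fun h => hq h.2
  have hF' : F * q' = p' := mul_left_cancel₀ hgcd <| by
    rw [mul_left_comm, ← Polynomial.coe_mul, ← Polynomial.coe_mul, ← hq', ← hp', hF]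
  have hrel : IsRelPrime p' q' := gcd_isUnit_iff_isRelPrime.mp hunit
  have hq'0 : q'.coeff 0 ≠ 0 := by
    intro h0
    have hp'0 : p'.coeff 0 = 0 := by
      rw [← Polynomial.constantCoeff_coe, ← hF', map_mul, Polynomial.constantCoeff_coe, h0,
        mul_zero]
    exact not_isUnit_X (hrel (Polynomial.X_dvd_iff.mpr hp'0) (Polynomial.X_dvd_iff.mpr h0))
  set u := Polynomial.C (q'.coeff 0)⁻¹
  have hu : IsUnit u := isUnit_C.mpr (inv_ne_zero hq'0).isUnit
  refine ⟨u * p', u * q', (isRelPrime_mul_unit_left hu).mpr hrel,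
    by rw [Polynomial.coeff_C_mul, inv_mul_cancel₀ hq'0], ?_⟩
  rw [Polynomial.coe_mul, Polynomial.coe_mul, mul_left_comm, hF']

theorem dvd_of_isRelPrime_of_mul_eq_coe {K : Type*} [Field K] {F : K⟦X⟧} {P Q h s : K[X]}
    (hPQ : IsRelPrime P Q) (hQ : F * Q = P) (hh : F * h = s) : Q ∣ h := by
  refine hPQ.symm.dvd_of_dvd_mul_left ⟨s, Polynomial.coe_inj.mp ?_⟩
  rw [Polynomial.coe_mul, Polynomial.coe_mul, ← hQ, ← hh]
  ring

theorem exists_coe_eq_of_map_eq_coe {B : Type*} [CommRing B] {φ : A →+* B}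
    (hφ : Function.Injective φ) {F : A⟦X⟧} {p : B[X]} (hF : map φ F = p) :
    ∃ P : A[X], P.map φ = p ∧ F = P := by
  have hP : F = trunc (p.natDegree + 1) F := eq_coe_trunc_of_coeff_eq_zero fun n hn => hφ <| by
    rw [← coeff_map, hF, map_zero, Polynomial.coeff_coe]
    exact coeff_eq_zero_of_natDegree_lt (by omega)
  refine ⟨_, Polynomial.coe_inj.mp ?_, hP⟩
  rw [polynomial_map_coe, ← hP, hF]

end PowerSeries

namespace Polynomial

theorem exists_map_eq_of_dvd_map_reverse {A K : Type*} [CommRing A] [IsDomain A]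
    [IsIntegrallyClosed A] [Field K] [Algebra A K] [IsFractionRing A K] {f : A[X]} (hf : f.Monic)
    {Q : K[X]} (hQ : Q.coeff 0 = 1) (hdvd : Q ∣ f.reverse.map (algebraMap A K)) :
    ∃ G : A[X], G.map (algebraMap A K) = Q := by
  set g := f.map (algebraMap A K)
  set m := f.natDegree
  have hg : g.natDegree = m := hf.natDegree_map _
  obtain ⟨T, hT⟩ := hdvd
  rw [reverse, ← reflect_map] at hT
  have hQ0 : Q ≠ 0 := fun h => by simp [h] at hQ
  have hT0 : T ≠ 0 := by
    rintro rfl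
    rw [mul_zero, reflect_eq_zero_iff] at hT
    exact (hf.map _).ne_zero hT
  have hdeg : Q.natDegree + T.natDegree ≤ m := by
    rw [← natDegree_mul hQ0 hT0, ← hT]
    exact natDegree_reflect_le.trans (by rw [hg, max_self])
  have hrev : Q.reverse ∣ g := by
    refine ⟨reflect (m - Q.natDegree) T, ?_⟩
    rw [reverse, ← reflect_mul _ _ le_rfl (by omega), ← hT, Nat.add_sub_cancel' (by omega),
      reflect_reflect]
  have hmonic : Q.reverse.Monic := by
    rw [Monic, reverse_leadingCoeff, trailingCoeff_eq_coeff_zero (by rw [hQ]; exact one_ne_zero),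
      hQ]
  obtain ⟨G, hG⟩ := IsIntegrallyClosed.eq_map_mul_C_of_dvd K hf hrev
  rw [hmonic.leadingCoeff, C_1, mul_one] at hG
  exact ⟨reflect Q.natDegree G, by rw [← reflect_map, hG, reverse, reflect_reflect]⟩

theorem isRelPrime_of_isRelPrime_map {A B : Type*} [CommRing A] [CommRing B] [IsDomain B]
    {φ : A →+* B} (hφ : Function.Injective φ) {P Q : A[X]} (hQ : Q.IsPrimitive)
    (h : IsRelPrime (P.map φ) (Q.map φ)) : IsRelPrime P Q := fun _ hDP hDQ =>
  ((isPrimitive_of_dvd hQ hDQ).isUnit_iff_isUnit_map_of_injective hφ).mpr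
    (h (Polynomial.map_dvd φ hDP) (Polynomial.map_dvd φ hDQ))

end Polynomial

theorem generalized_fatou_general
    (A : Type*) [CommRing A] [IsDedekindDomain A]
    (F : PowerSeries A)
    (h : ∃ p q : Polynomial A, q ≠ 0 ∧ F * (q : PowerSeries A) = (p : PowerSeries A)) :
    ∃ P Q : Polynomial A, IsRelPrime P Q ∧ Q.coeff 0 = 1 ∧
      F * (Q : PowerSeries A) = (P : PowerSeries A) := by
  obtain ⟨p, q, hq, hFq⟩ := h
  obtain ⟨f, hf, s, hFs⟩ := PowerSeries.exists_monic_mul_reverse_eq_coe hq hFq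
  set φ := algebraMap A (FractionRing A)
  have hφ : Function.Injective φ := IsFractionRing.injective A _
  have hrev : (f.reverse.map φ).coeff 0 = 1 := by
    rw [coeff_map, coeff_zero_reverse, hf.leadingCoeff, map_one]
  have hFs' : PowerSeries.map φ F * (f.reverse.map φ : _) = (s.map φ : _) := by
    rw [polynomial_map_coe, polynomial_map_coe, ← map_mul, hFs]
  obtain ⟨P₀, Q₀, hrel, hQ₀, hFQ₀⟩ := PowerSeries.exists_isRelPrime_mul_eq_coe
    (fun h0 => by simp [h0] at hrev) hFs'
  obtain ⟨G, rfl⟩ := exists_map_eq_of_dvd_map_reverse hf hQ₀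
    (PowerSeries.dvd_of_isRelPrime_of_mul_eq_coe hrel hFQ₀ hFs')
  obtain ⟨P, rfl, hP⟩ := PowerSeries.exists_coe_eq_of_map_eq_coe hφ (F := F * G)
    (by rw [map_mul, ← polynomial_map_coe, hFQ₀])
  have hG : G.coeff 0 = 1 := hφ (by rw [← coeff_map, hQ₀, map_one])
  refine ⟨P, G, isRelPrime_of_isRelPrime_map hφ ?_ hrel, hG, hP⟩
  exact fun r hr => isUnit_of_dvd_one (hG ▸ (C_dvd_iff_dvd_coeff r G).mp hr 0)

/-- Generalized Fatou's Lemma: over a Dedekind domain `A`, a formal power series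
that equals a quotient `p/q` of polynomials can be written as `P/Q` with `P, Q`
relatively prime and `Q(0) = 1`. -/
theorem generalized_fatou
    (A : Type*) [CommRing A] [IsDomain A] [IsDedekindDomain A]
    (F : PowerSeries A)
    (h : ∃ p q : Polynomial A, q ≠ 0 ∧ F * (q : PowerSeries A) = (p : PowerSeries A)) :
    ∃ P Q : Polynomial A, IsRelPrime P Q ∧ Q.coeff 0 = 1 ∧
      F * (Q : PowerSeries A) = (P : PowerSeries A) :=
  generalized_fatou_general A F h
end

section
/- Let K be a field with subfield k', and let {c_n} (n ∈ ℤ) be elements of K satisfying a linear recurrence c_n = r_1 c_{n-1} + r_2 c_{n-2} + ... + r_M c_{n-M} for all n ∈ ℤ, where r_1,...,r_M ∈ K with r_M ≠ 0, and the recurrence is of exact order M (so the Hankel matrix C_n = (c_{n+i+j})_{0≤i,j≤M-1} is nonsingular). If c_n ∈ k' for every n ≥ n_0, then the coefficients r_1,...,r_M all lie in k', and c_n ∈ k' for every n ∈ ℤ. -/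
/-!
The recurrence says that the Hankel matrix `C_{n₀}`, whose entries lie in `k'`, sends the vector
`(r_M, …, r_1)` to `(c_{n₀+M}, …, c_{n₀+2M-1})`, which also lies in `k'`. Since `C_{n₀}` is
invertible, this system has a solution over `k'`, and by uniqueness over `K` it is the vector of
coefficients. Because `r_M ≠ 0`, the recurrence can then be solved for its last term,
`c_{n-M} = (c_n - ∑_{i<M} r_i c_{n-i}) / r_M`, and downward induction gives `c_n ∈ k'` for all `n`.
-/

open Finset Matrix

theorem Subfield.mem_of_mulVec_eq {K n : Type*} [Field K] [Fintype n] [DecidableEq n]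
    (S : Subfield K) {A : Matrix n n K} {v b : n → K} (hA : ∀ i j, A i j ∈ S)
    (hdet : A.det ≠ 0) (hb : ∀ i, b i ∈ S) (hAv : A *ᵥ v = b) (j : n) : v j ∈ S := by
  set A' : Matrix n n S := .of fun i j => ⟨A i j, hA i j⟩
  have hmap : A'.map S.subtype = A := rfl
  have hdet' : IsUnit A'.det := by
    refine isUnit_iff_ne_zero.2 fun h => hdet ?_
    rw [← hmap, ← RingHom.mapMatrix_apply, ← RingHom.map_det, h, map_zero]
  set x : n → S := A'⁻¹ *ᵥ fun i => ⟨b i, hb i⟩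
  have hx : A *ᵥ (S.subtype ∘ x) = b := by
    ext i
    rw [← hmap, ← RingHom.map_mulVec, mulVec_mulVec, mul_nonsing_inv _ hdet', one_mulVec]
    rfl
  rw [← mulVec_injective_of_det_ne_zero hdet (hx.trans hAv.symm)]
  exact (x j).2

theorem add_eq_sum_of_linear_recurrence {R : Type*} [CommSemiring R] {M : ℕ} {r : ℕ → R}
    {c : ℤ → R} (hrec : ∀ n : ℤ, c n = ∑ i ∈ range M, r (i + 1) * c (n - (i + 1 : ℕ)))
    (n : ℤ) : c (n + M) = ∑ j ∈ range M, c (n + j) * r (M - j) := by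
  rw [hrec, ← sum_range_reflect]
  refine sum_congr rfl fun j hj => ?_
  have hjM := mem_range.1 hj
  rw [mul_comm, show M - 1 - j + 1 = M - j by omega]
  congr 2
  omega

theorem hankel_mulVec_of_linear_recurrence {R : Type*} [CommSemiring R] {M : ℕ} {r : ℕ → R}
    {c : ℤ → R} (hrec : ∀ n : ℤ, c n = ∑ i ∈ range M, r (i + 1) * c (n - (i + 1 : ℕ)))
    (n : ℤ) :
    (Matrix.of fun i j : Fin M => c (n + (i : ℕ) + (j : ℕ))) *ᵥ (fun j : Fin M => r (M - j)) =
      fun i : Fin M => c (n + (i : ℕ) + M) := by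
  ext i
  rw [add_eq_sum_of_linear_recurrence hrec, ← Fin.sum_univ_eq_sum_range]
  rfl

theorem mem_sub_one_of_linear_recurrence {K : Type*} [Field K] (S : Subfield K) {M : ℕ}
    (hM : 0 < M) {r : ℕ → K} {c : ℤ → K} (hrM : r M ≠ 0)
    (hrec : ∀ n : ℤ, c n = ∑ i ∈ range M, r (i + 1) * c (n - (i + 1 : ℕ)))
    (hr : ∀ i : ℕ, 1 ≤ i → i ≤ M → r i ∈ S) {n : ℤ} (hc : ∀ k, n ≤ k → c k ∈ S) :
    c (n - 1) ∈ S := by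
  obtain ⟨N, rfl⟩ : ∃ N, M = N + 1 := ⟨M - 1, by omega⟩
  have h := hrec (n - 1 + (N + 1 : ℕ))
  rw [sum_range_succ, add_sub_cancel_right] at h
  have hlast : c (n - 1) = (c (n - 1 + (N + 1 : ℕ)) - ∑ i ∈ range N,
      r (i + 1) * c (n - 1 + (N + 1 : ℕ) - (i + 1 : ℕ))) / r (N + 1) := by
    rw [eq_div_iff hrM]
    linear_combination -h
  rw [hlast]
  refine S.div_mem (S.sub_mem (hc _ (by omega)) (S.sum_mem fun i hi => S.mul_mem ?_ ?_))
    (hr _ (by omega) le_rfl)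
  · have := mem_range.1 hi; exact hr _ (by omega) (by omega)
  · have := mem_range.1 hi; exact hc _ (by omega)

theorem mem_of_linear_recurrence {K : Type*} [Field K] (S : Subfield K) {M : ℕ}
    (hM : 0 < M) {r : ℕ → K} {c : ℤ → K} (hrM : r M ≠ 0)
    (hrec : ∀ n : ℤ, c n = ∑ i ∈ range M, r (i + 1) * c (n - (i + 1 : ℕ)))
    (hr : ∀ i : ℕ, 1 ≤ i → i ≤ M → r i ∈ S) {n₀ : ℤ} (hc : ∀ n, n₀ ≤ n → c n ∈ S) (n : ℤ) :
    c n ∈ S := by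
  suffices h : ∀ m ≤ n₀, ∀ k, m ≤ k → c k ∈ S from h _ (min_le_right n n₀) n (min_le_left n n₀)
  intro m hm
  induction m, hm using Int.leInductionDown with
  | base => exact hc
  | pred m _ ih =>
    intro k hk
    rcases hk.lt_or_eq with hk | rfl
    · exact ih k (by omega)
    · exact mem_sub_one_of_linear_recurrence S hM hrM hrec hr ih

/-- If a doubly infinite sequence over `K` satisfies an order-`M` linear recurrence
(with `r_M ≠ 0` and all Hankel matrices nonsingular) and its terms lie in a subfield
`k'` from some index on, then the recurrence coefficients and all terms lie in `k'`. -/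
theorem recurrence_coeffs_and_terms_in_subfield
    (K : Type*) [Field K] (k' : Subfield K)
    (M : ℕ) (hM : 0 < M) (r : ℕ → K) (c : ℤ → K)
    (hrM : r M ≠ 0)
    (hrec : ∀ n : ℤ, c n = ∑ i ∈ Finset.range M, r (i + 1) * c (n - (i + 1 : ℕ)))
    (hHankel : ∀ n : ℤ,
      (Matrix.of fun i j : Fin M => c (n + (i : ℕ) + (j : ℕ))).det ≠ 0)
    (n₀ : ℤ) (hc : ∀ n : ℤ, n₀ ≤ n → c n ∈ k') :
    (∀ i : ℕ, 1 ≤ i → i ≤ M → r i ∈ k') ∧ (∀ n : ℤ, c n ∈ k') := by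
  have hr : ∀ i : ℕ, 1 ≤ i → i ≤ M → r i ∈ k' := by
    intro i hi hiM
    have h := k'.mem_of_mulVec_eq (fun _ _ => hc _ (by omega)) (hHankel n₀)
      (fun _ => hc _ (by omega)) (hankel_mulVec_of_linear_recurrence hrec n₀) ⟨M - i, by omega⟩
    rwa [Nat.sub_sub_self hiM] at h
  exact ⟨hr, mem_of_linear_recurrence k' hM hrM hrec hr hc⟩
end

section
/- Let k' be a field with a discrete valuation v and valuation ring O_{k',v} (a Dedekind, indeed DVR, hence Dedekind domain). Let {c_n} (n ∈ ℤ) be elements of k' satisfying c_n = r_1 c_{n-1} + ... + r_M c_{n-M} for all n ∈ ℤ with r_1,...,r_M ∈ k', r_M ≠ 0, and the recurrence of exact order M (Hankel matrices nonsingular). If c_n ∈ O_{k',v} for all n ≥ n_0, then r_1,...,r_M ∈ O_{k',v}. -/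
/-!
Put `f = ∑ c_{n₀+n} Xⁿ` and `Q = 1 - r₁X - ⋯ - r_M X^M`. The recurrence says that `Q f = P` is a
polynomial of degree `< M`. A common factor of `P` and `Q` would give a recurrence of order `< M`
and hence a singular Hankel matrix, so `A P + B Q = 1` for some polynomials `A, B`, and
`1 / Q = A f + B` has coefficients of bounded valuation. Over a discrete valuation ring the bound
is attained, and multiplicativity of the Gauss norm applied to `Q · (1 / Q) = 1` then shows that
every coefficient of `Q` has valuation at most that of `Q(0) = 1`.
-/

open Finset Polynomial

open scoped PowerSeries

open scoped Classical in
theorem Nat.apply_lt_apply_find {α : Type*} [LinearOrder α] {g : ℕ → α}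
    (h : ∃ j, ∀ m, g m ≤ g j) {m : ℕ} (hm : m < Nat.find h) : g m < g (Nat.find h) :=
  (Nat.find_spec h m).lt_of_not_ge fun hge =>
    Nat.find_min h hm fun k => (Nat.find_spec h k).trans hge

section Valuation

variable {R Γ₀ : Type*} [CommRing R] [LinearOrderedCommGroupWithZero Γ₀] (v : Valuation R Γ₀)

theorem Polynomial.exists_forall_valuation_coeff_le (p : R[X]) :
    ∃ n, ∀ m, v (p.coeff m) ≤ v (p.coeff n) := by
  obtain ⟨n, -, hn⟩ := (range (p.natDegree + 1)).exists_max_image (fun m => v (p.coeff m))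
    nonempty_range_add_one
  refine ⟨n, fun m => ?_⟩
  by_cases hm : m ≤ p.natDegree
  · exact hn m (mem_range.2 (Nat.lt_succ_of_le hm))
  · simp [coeff_eq_zero_of_natDegree_lt (not_le.1 hm)]

namespace PowerSeries

theorem exists_valuation_coeff_coe_mul_add_le (A B : R[X]) {f : R⟦X⟧}
    (hf : ∀ n, v (coeff n f) ≤ 1) :
    ∃ γ, ∀ n, v (coeff n ((A : R⟦X⟧) * f + B)) ≤ γ := by
  obtain ⟨a, ha⟩ := A.exists_forall_valuation_coeff_le v
  obtain ⟨b, hb⟩ := B.exists_forall_valuation_coeff_le v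
  refine ⟨max (v (A.coeff a)) (v (B.coeff b)), fun n => ?_⟩
  rw [map_add, coeff_mul, Polynomial.coeff_coe]
  refine (v.map_add _ _).trans (max_le_max (v.map_sum_le fun p _ => ?_) (hb n))
  rw [v.map_mul, Polynomial.coeff_coe]
  exact mul_le_of_le_of_le_one (ha _) (hf _)

-- Multiplicativity of the Gauss norm: at these first maximising indices the coefficient of the
-- product has a single dominant term.
theorem valuation_coeff_add_mul_eq {φ ψ : R⟦X⟧} {j n : ℕ}
    (hφ : ∀ m, v (coeff m φ) ≤ v (coeff j φ)) (hφ_lt : ∀ m < j, v (coeff m φ) < v (coeff j φ))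
    (hψ : ∀ m, v (coeff m ψ) ≤ v (coeff n ψ)) (hψ_lt : ∀ m < n, v (coeff m ψ) < v (coeff n ψ)) :
    v (coeff (j + n) (φ * ψ)) = v (coeff j φ) * v (coeff n ψ) := by
  classical
  rw [coeff_mul]
  by_cases h0 : v (coeff j φ) * v (coeff n ψ) = 0
  · refine h0 ▸ le_antisymm (v.map_sum_le fun p _ => ?_) zero_le
    exact h0 ▸ (v.map_mul _ _).trans_le (mul_le_mul' (hφ p.1) (hψ p.2))
  rw [← v.map_mul]
  refine v.map_sum_eq_of_lt (f := fun p : ℕ × ℕ => coeff p.1 φ * coeff p.2 ψ) (j := (j, n))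
    (mem_antidiagonal.2 rfl) fun p hp => ?_
  obtain ⟨hp, hpjn⟩ : p.1 + p.2 = j + n ∧ p ≠ (j, n) := by simpa using hp
  simp only [v.map_mul]
  rcases lt_or_ge p.1 j with h | h
  · exact mul_lt_mul_of_lt_of_le_of_nonneg_of_pos (hφ_lt _ h) (hψ _) zero_le
      (zero_lt_iff.2 (right_ne_zero_of_mul h0))
  · have : p.2 < n := by
      by_contra! h'
      exact hpjn (Prod.ext (by omega) (by omega))
    exact mul_lt_mul_of_le_of_lt_of_nonneg_of_pos (hφ _) (hψ_lt _ this) zero_le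
      (zero_lt_iff.2 (left_ne_zero_of_mul h0))

open scoped Classical in
theorem valuation_coeff_le_of_mul_eq_C {φ ψ : R⟦X⟧} {e : R} (he : v e ≠ 0)
    (h : φ * ψ = C e) (hφ : ∃ j, ∀ m, v (coeff m φ) ≤ v (coeff j φ))
    (hψ : ∃ n, ∀ m, v (coeff m ψ) ≤ v (coeff n ψ)) (m : ℕ) :
    v (coeff m φ) ≤ v (coeff 0 φ) := by
  have key := valuation_coeff_add_mul_eq v (Nat.find_spec hφ) (fun _ => Nat.apply_lt_apply_find hφ)
    (Nat.find_spec hψ) (fun _ => Nat.apply_lt_apply_find hψ)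
  have he_le : v e ≤ v (coeff (Nat.find hφ) φ) * v (coeff (Nat.find hψ) ψ) := by
    have : coeff 0 φ * coeff 0 ψ = e := by
      simpa only [coeff_zero_eq_constantCoeff_apply, map_mul, constantCoeff_C] using
        congrArg constantCoeff h
    rw [← this, v.map_mul]
    exact mul_le_mul' (Nat.find_spec hφ 0) (Nat.find_spec hψ 0)
  have hfind : Nat.find hφ + Nat.find hψ = 0 := by
    by_contra hne
    rw [h, coeff_C, if_neg hne, v.map_zero] at key
    exact he (le_zero_iff.1 (key ▸ he_le))
  simpa [Nat.eq_zero_of_add_eq_zero_right hfind] using Nat.find_spec hφ m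

end PowerSeries

end Valuation

namespace ValuationSubring

variable {K : Type*} [Field K] (O : ValuationSubring K)

theorem dvd_iff_valuation_le {x y : O} : x ∣ y ↔ O.valuation y ≤ O.valuation x := by
  rw [valuation_le_iff]
  constructor
  · rintro ⟨a, rfl⟩
    exact ⟨a, by push_cast; ring⟩
  · rintro ⟨a, ha⟩
    exact ⟨a, Subtype.ext (by push_cast; rw [← ha, mul_comm])⟩

variable [WfDvdMonoid O] {ι : Type*} [Nonempty ι]

-- An element of maximal valuation is a minimal element for strict divisibility.
theorem exists_forall_valuation_le_of_forall_mem {x : ι → K} (hx : ∀ i, x i ∈ O) :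
    ∃ i, ∀ j, O.valuation (x j) ≤ O.valuation (x i) := by
  let y : ι → O := fun i => ⟨x i, hx i⟩
  obtain ⟨_, ⟨i, rfl⟩, hmin⟩ :=
    wellFounded_dvdNotUnit.has_min (Set.range y) (Set.range_nonempty y)
  refine ⟨i, fun j => not_lt.1 fun hlt => hmin (y j) ⟨j, rfl⟩ ?_⟩
  exact dvdNotUnit_of_dvd_of_not_dvd ((dvd_iff_valuation_le O).2 hlt.le)
    fun h => ((dvd_iff_valuation_le O).1 h).not_gt hlt

theorem exists_forall_valuation_le {x : ι → K} {γ : ValueGroup O}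
    (hx : ∀ i, O.valuation (x i) ≤ γ) : ∃ i, ∀ j, O.valuation (x j) ≤ O.valuation (x i) := by
  obtain ⟨e, rfl⟩ := O.valuation_surjective γ
  rcases eq_or_ne e 0 with rfl | he
  · have hx0 : ∀ i, x i = 0 := by simpa using hx
    simp [hx0]
  have hve : 0 < O.valuation e := (O.valuation.pos_iff).2 he
  obtain ⟨i, hi⟩ := O.exists_forall_valuation_le_of_forall_mem (x := fun i => e⁻¹ * x i)
    fun i => (valuation_le_one_iff _ _).1 (by simpa [inv_mul_le_one₀ hve] using hx i)
  refine ⟨i, fun j => ?_⟩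
  simpa [mul_le_mul_iff_of_pos_left, inv_pos.2 hve] using hi j

end ValuationSubring

namespace PowerSeries

variable {R : Type*} [CommRing R]

theorem coeff_coe_mul_eq_sum_range (p : R[X]) (f : R⟦X⟧) {M n : ℕ}
    (hp : p.natDegree < M) (hn : M - 1 ≤ n) :
    coeff n ((p : R⟦X⟧) * f) = ∑ k ∈ range M, p.coeff k * coeff (n - k) f := by
  rw [coeff_mul, Nat.sum_antidiagonal_eq_sum_range_succ_mk]
  simp only [Polynomial.coeff_coe]
  symm
  refine sum_subset (range_subset_range.2 (by omega)) fun k _ hk => ?_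
  rw [coeff_eq_zero_of_natDegree_lt (by simp at hk; omega), zero_mul]

-- The reversed coefficient vector of `p` lies in the kernel of the Hankel matrix.
theorem det_hankel_eq_zero [IsDomain R] (f : R⟦X⟧) {p : R[X]} {M : ℕ} (hp0 : p ≠ 0)
    (hp : p.natDegree < M) (hpf : ∀ n, M - 1 ≤ n → coeff n ((p : R⟦X⟧) * f) = 0) :
    (Matrix.of fun i j : Fin M => coeff ((i : ℕ) + j) f).det = 0 := by
  refine Matrix.exists_mulVec_eq_zero_iff.1 ⟨fun t => p.coeff (M - 1 - t), fun h => ?_, ?_⟩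
  · have := congrFun h ⟨M - 1 - p.natDegree, by omega⟩
    simp only [Pi.zero_apply, show M - 1 - (M - 1 - p.natDegree) = p.natDegree by omega] at this
    exact hp0 (leadingCoeff_eq_zero.1 this)
  · funext i
    simp only [Matrix.mulVec, dotProduct, Matrix.of_apply, Pi.zero_apply]
    rw [← hpf (M - 1 + i) (by omega), coeff_coe_mul_eq_sum_range p f hp (by omega),
      Fin.sum_univ_eq_sum_range (fun t => coeff (i + t) f * p.coeff (M - 1 - t)),
      ← sum_range_reflect]
    refine sum_congr rfl fun k hk => ?_
    rw [mem_range] at hk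
    rw [mul_comm, show M - 1 - (M - 1 - k) = k by omega,
      show i + (M - 1 - k) = M - 1 + i - k by omega]

-- A common factor of `P` and `Q` would leave a relation of order `< M` among the coefficients.
theorem isCoprime_of_det_hankel_ne_zero {K : Type*} [Field K] (f : K⟦X⟧) {P Q : K[X]}
    {M : ℕ} (hQ0 : Q ≠ 0) (hQ : Q.natDegree ≤ M) (hP : P.degree < M) (hQf : (Q : K⟦X⟧) * f = P)
    (hH : (Matrix.of fun i j : Fin M => coeff ((i : ℕ) + j) f).det ≠ 0) : IsCoprime P Q := by
  refine isCoprime_of_dvd P Q (fun h => hQ0 h.2) fun z hz hz0 ⟨P₁, hP₁⟩ ⟨Q₁, hQ₁⟩ => hH ?_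
  have hzdeg : 0 < z.natDegree :=
    natDegree_pos_iff_degree_pos.2 (degree_pos_of_ne_zero_of_nonunit hz0 hz)
  have hQ₁0 : Q₁ ≠ 0 := by rintro rfl; exact hQ0 (by rw [hQ₁, mul_zero])
  have hQ₁f : (Q₁ : K⟦X⟧) * f = P₁ := by
    refine mul_left_cancel₀ (Polynomial.coe_eq_zero_iff.not.2 hz0) ?_
    rw [← mul_assoc, ← Polynomial.coe_mul, ← hQ₁, hQf, hP₁, Polynomial.coe_mul]
  refine det_hankel_eq_zero f hQ₁0 ?_ fun n hn => ?_
  · have := natDegree_mul hz0 hQ₁0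
    rw [← hQ₁] at this
    omega
  · rw [hQ₁f, Polynomial.coeff_coe]
    rcases eq_or_ne P₁ 0 with rfl | hP₁0
    · exact Polynomial.coeff_zero n
    · have hdeg := natDegree_mul hz0 hP₁0
      rw [← hP₁] at hdeg
      have : P.natDegree < M := by
        rw [natDegree_lt_iff_degree_lt (fun h => hP₁0 (by simpa [h, hz0] using hP₁))]
        exact hP
      exact coeff_eq_zero_of_natDegree_lt (by omega)

end PowerSeries

section ConnectionPoly

variable {R : Type*} [CommRing R]

noncomputable def connectionPoly (r : ℕ → R) (M : ℕ) : R[X] :=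
  1 - ∑ i ∈ range M, C (r (i + 1)) * X ^ (i + 1)

variable (r : ℕ → R) (M : ℕ)

theorem coeff_connectionPoly_zero : (connectionPoly r M).coeff 0 = 1 := by
  simp [connectionPoly, finsetSum_coeff]

theorem coeff_connectionPoly {i : ℕ} (hi : 1 ≤ i) (hiM : i ≤ M) :
    (connectionPoly r M).coeff i = -r i := by
  obtain ⟨i, rfl⟩ := Nat.exists_eq_add_of_le' hi
  simp [connectionPoly, finsetSum_coeff, coeff_one, show i < M by omega]

theorem connectionPoly_ne_zero [Nontrivial R] : connectionPoly r M ≠ 0 := fun h => by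
  simpa [h] using coeff_connectionPoly_zero r M

theorem natDegree_connectionPoly_le : (connectionPoly r M).natDegree ≤ M := by
  refine (natDegree_sub_le _ _).trans (max_le (by simp) ?_)
  refine natDegree_sum_le_of_forall_le _ _ fun i hi => (natDegree_C_mul_X_pow_le _ _).trans ?_
  rw [mem_range] at hi
  omega

theorem coeff_connectionPoly_mul (f : R⟦X⟧) {n : ℕ} (hn : M ≤ n) :
    PowerSeries.coeff n ((connectionPoly r M : R⟦X⟧) * f) =
      PowerSeries.coeff n f - ∑ i ∈ range M, r (i + 1) * PowerSeries.coeff (n - (i + 1)) f := by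
  have hcoe : ((∑ i ∈ range M, C (r (i + 1)) * X ^ (i + 1) : R[X]) : R⟦X⟧) =
      ∑ i ∈ range M, PowerSeries.C (r (i + 1)) * PowerSeries.X ^ (i + 1) := by
    rw [← coeToPowerSeries.ringHom_apply, map_sum]
    simp only [map_mul, map_pow, coeToPowerSeries.ringHom_apply, coe_C, coe_X]
  rw [connectionPoly, Polynomial.coe_sub, Polynomial.coe_one, sub_mul, one_mul, map_sub, hcoe,
    sum_mul, map_sum]
  congr 1
  refine sum_congr rfl fun i hi => ?_
  rw [mem_range] at hi
  rw [mul_assoc, PowerSeries.coeff_C_mul, PowerSeries.coeff_X_pow_mul', if_pos (by omega)]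

theorem connectionPoly_mul_eq_coe_trunc {f : R⟦X⟧} (hf : ∀ n, M ≤ n →
      PowerSeries.coeff n f = ∑ i ∈ range M, r (i + 1) * PowerSeries.coeff (n - (i + 1)) f) :
    (connectionPoly r M : R⟦X⟧) * f = PowerSeries.trunc M ((connectionPoly r M : R⟦X⟧) * f) := by
  ext n
  rw [Polynomial.coeff_coe, PowerSeries.coeff_trunc]
  split_ifs with h
  · rfl
  · rw [coeff_connectionPoly_mul r M f (not_lt.1 h), hf n (not_lt.1 h), sub_self]

end ConnectionPoly

theorem recurrence_coeffs_in_valuation_ring_general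
    (k' : Type*) [Field k'] (O : ValuationSubring k')
    [IsDiscreteValuationRing O]
    (M : ℕ) (r : ℕ → k') (c : ℤ → k')
    (hrec : ∀ n : ℤ, c n = ∑ i ∈ Finset.range M, r (i + 1) * c (n - (i + 1 : ℕ)))
    (hHankel : ∀ n : ℤ,
      (Matrix.of fun i j : Fin M => c (n + (i : ℕ) + (j : ℕ))).det ≠ 0)
    (n₀ : ℤ) (hc : ∀ n : ℤ, n₀ ≤ n → c n ∈ O) :
    ∀ i : ℕ, 1 ≤ i → i ≤ M → r i ∈ O := by
  set f : k'⟦X⟧ := PowerSeries.mk fun n => c (n₀ + n)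
  set Q := connectionPoly r M
  have hQf : (Q : k'⟦X⟧) * f = PowerSeries.trunc M ((Q : k'⟦X⟧) * f) :=
    connectionPoly_mul_eq_coe_trunc r M fun n hn => by
      simp only [f, PowerSeries.coeff_mk, hrec (n₀ + n)]
      refine sum_congr rfl fun i hi => ?_
      rw [mem_range] at hi
      congr 2
      omega
  obtain ⟨A, B, hAB⟩ := PowerSeries.isCoprime_of_det_hankel_ne_zero f (connectionPoly_ne_zero r M)
    (natDegree_connectionPoly_le r M) (PowerSeries.degree_trunc_lt _ _) hQf
    (by simpa [f, add_assoc] using hHankel n₀)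
  have hinv : (Q : k'⟦X⟧) * ((A : k'⟦X⟧) * f + (B : k'⟦X⟧)) = PowerSeries.C 1 := by
    calc (Q : k'⟦X⟧) * ((A : k'⟦X⟧) * f + (B : k'⟦X⟧))
        = (A : k'⟦X⟧) * ((Q : k'⟦X⟧) * f) + (B : k'⟦X⟧) * Q := by ring
      _ = PowerSeries.C 1 := by
        rw [hQf, ← Polynomial.coe_mul, ← Polynomial.coe_mul, ← Polynomial.coe_add, hAB]
        simp
  obtain ⟨γ, hγ⟩ := PowerSeries.exists_valuation_coeff_coe_mul_add_le O.valuation A B (f := f)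
    fun n => (O.valuation_le_one_iff _).2 (by simpa [f] using hc (n₀ + n) (by omega))
  intro i hi hiM
  have hQi := PowerSeries.valuation_coeff_le_of_mul_eq_C O.valuation (by simp) hinv
    (by simpa only [Polynomial.coeff_coe] using Q.exists_forall_valuation_coeff_le O.valuation)
    (O.exists_forall_valuation_le hγ) i
  rw [Polynomial.coeff_coe, Polynomial.coeff_coe, coeff_connectionPoly_zero, map_one,
    coeff_connectionPoly r M hi hiM, Valuation.map_neg] at hQi
  exact O.mem_of_valuation_le_one _ hQi

/-- If a doubly infinite sequence in a field `k'` satisfies an order-`M` linear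
recurrence (with `r_M ≠ 0` and nonsingular Hankel matrices) and its terms lie in the
valuation ring `O` (a DVR) from some index on, then all the recurrence coefficients
lie in `O`. -/
theorem recurrence_coeffs_in_valuation_ring
    (k' : Type*) [Field k'] (O : ValuationSubring k')
    [IsDiscreteValuationRing O]
    (M : ℕ) (hM : 0 < M) (r : ℕ → k') (c : ℤ → k')
    (hrM : r M ≠ 0)
    (hrec : ∀ n : ℤ, c n = ∑ i ∈ Finset.range M, r (i + 1) * c (n - (i + 1 : ℕ)))
    (hHankel : ∀ n : ℤ,
      (Matrix.of fun i j : Fin M => c (n + (i : ℕ) + (j : ℕ))).det ≠ 0)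
    (n₀ : ℤ) (hc : ∀ n : ℤ, n₀ ≤ n → c n ∈ O) :
    ∀ i : ℕ, 1 ≤ i → i ≤ M → r i ∈ O :=
  recurrence_coeffs_in_valuation_ring_general k' O M r c hrec hHankel n₀ hc
end

section
/- Let (c_n)_{n∈ℤ} satisfy the order-M linear recurrence with r_M ≠ 0 over a field K, and suppose the Hankel matrix C_{t_0} = (c_{t_0+i+j})_{0≤i,j≤M-1} is nonsingular. Then the polynomials p_{t}(X) and q(X) (with p_t q-numerator as above, q(X) = 1 - Σ r_i X^i) are relatively prime in K[X] for each t ≥ t_0; in particular they have no common root in an algebraic closure of K. -/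
/-!
Over `K[X]` the recurrence gives `p_t = c_t q + X p_{t+1}`, and `X` is coprime to `q` because
`q(0) = 1`; hence the ideal `(p_t, q)` contains `p_s` for every `s`. Expanding the coefficients,
`p_s = ∑_k c_{s+k} X^k q_{M-1-k}`, where `q_n` is `q` truncated to the terms `r_1 X, …, r_n X^n`.
So the Hankel matrix `C_{t₀}`, invertible over `K[X]`, maps the vector `(X^k q_{M-1-k})_k` to
`(p_{t₀+i})_i`; inverting it puts the last entry `X^{M-1}` in the ideal, and as `X^{M-1}` is
coprime to `q` the ideal is everything.
-/

open Polynomial Finset Matrix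

section

variable {R : Type*} [CommRing R]

theorem Ideal.mem_of_mul_mem_of_isCoprime {I : Ideal R} {a b y : R} (hab : IsCoprime a b)
    (hb : b ∈ I) (hay : a * y ∈ I) : y ∈ I := by
  obtain ⟨u, v, huv⟩ := hab
  have : y = u * (a * y) + (v * y) * b := by linear_combination (-y) * huv
  rw [this]
  exact I.add_mem (I.mul_mem_left u hay) (I.mul_mem_left _ hb)

theorem Matrix.mem_of_mulVec_mem {n : Type*} [Fintype n] [DecidableEq n] {I : Ideal R}
    {A : Matrix n n R} (hA : IsUnit A.det) {v : n → R} (hv : ∀ i, (A *ᵥ v) i ∈ I) (k : n) :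
    v k ∈ I := by
  rw [← one_mulVec v, ← nonsing_inv_mul A hA, ← mulVec_mulVec]
  exact I.sum_mem fun j _ => I.mul_mem_left _ (hv j)

end

noncomputable section

variable {R : Type*} [CommRing R] (M : ℕ) (r : ℕ → R) (c : ℤ → R)

def numeratorCoeff (t : ℤ) (j : ℕ) : R :=
  c (t + j) - ∑ i ∈ range j, r (i + 1) * c (t + j - (i + 1 : ℕ))

def recNumerator (t : ℤ) : R[X] :=
  ∑ j ∈ range M, C (numeratorCoeff r c t j) * X ^ j

def recDenominator : R[X] :=
  1 - ∑ i ∈ range M, C (r (i + 1)) * X ^ (i + 1)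

def hankelMatrix (t : ℤ) : Matrix (Fin M) (Fin M) R :=
  Matrix.of fun i j => c (t + (i : ℕ) + (j : ℕ))

theorem isCoprime_X_recDenominator : IsCoprime X (recDenominator M r) :=
  ⟨∑ i ∈ range M, C (r (i + 1)) * X ^ i, 1, by
    simp only [recDenominator, sum_mul, pow_succ, mul_assoc]; ring⟩

variable {r c}

theorem numeratorCoeff_succ (t : ℤ) (j : ℕ) :
    numeratorCoeff r c t (j + 1) = numeratorCoeff r c (t + 1) j - r (j + 1) * c t := by
  simp only [numeratorCoeff, sum_range_succ]
  have hlast : t + ((j + 1 : ℕ) : ℤ) - ((j + 1 : ℕ) : ℤ) = t := by ring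
  have hshift : t + ((j + 1 : ℕ) : ℤ) = t + 1 + j := by push_cast; ring
  rw [hlast, hshift]
  ring

theorem numeratorCoeff_order_eq_zero
    (hrec : ∀ n : ℤ, c n = ∑ i ∈ range M, r (i + 1) * c (n - (i + 1 : ℕ))) (t : ℤ) :
    numeratorCoeff r c t M = 0 :=
  sub_eq_zero.mpr (hrec _)

theorem recNumerator_succ (t : ℤ) :
    recNumerator (M + 1) r c t =
      C (c t) * recDenominator M r + X * recNumerator M r c (t + 1) := by
  have hterm : ∀ j ∈ range M, C (numeratorCoeff r c t (j + 1)) * X ^ (j + 1)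
      = X * (C (numeratorCoeff r c (t + 1) j) * X ^ j)
        - C (c t) * (C (r (j + 1)) * X ^ (j + 1)) := by
    intro j _
    rw [numeratorCoeff_succ, C_sub, C_mul, pow_succ]
    ring
  rw [recNumerator, sum_range_succ', sum_congr rfl hterm, sum_sub_distrib, ← mul_sum, ← mul_sum,
    recDenominator, recNumerator]
  simp only [numeratorCoeff, range_zero, sum_empty, Nat.cast_zero, add_zero, sub_zero, pow_zero,
    mul_one]
  ring

theorem recNumerator_eq_C_mul_add_X_mul
    (hrec : ∀ n : ℤ, c n = ∑ i ∈ range M, r (i + 1) * c (n - (i + 1 : ℕ))) (t : ℤ) :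
    recNumerator M r c t = C (c t) * recDenominator M r + X * recNumerator M r c (t + 1) := by
  rw [← recNumerator_succ]
  simp only [recNumerator, sum_range_succ _ M, numeratorCoeff_order_eq_zero M hrec, C_0, zero_mul,
    add_zero]

theorem recNumerator_eq_sum (t : ℤ) :
    recNumerator M r c t =
      ∑ k ∈ range M, C (c (t + k)) * (X ^ k * recDenominator (M - (k + 1)) r) := by
  induction M generalizing t with
  | zero => simp [recNumerator]
  | succ M ih =>
    rw [recNumerator_succ, ih, sum_range_succ', mul_sum, add_comm]
    congr 1
    · refine sum_congr rfl fun k _ => ?_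
      rw [Nat.add_sub_add_right, Nat.cast_succ, add_right_comm, ← add_assoc, pow_succ]
      ring
    · simp

variable {M}

theorem recNumerator_mem_of_mem
    (hrec : ∀ n : ℤ, c n = ∑ i ∈ range M, r (i + 1) * c (n - (i + 1 : ℕ)))
    {I : Ideal R[X]} (hq : recDenominator M r ∈ I) {t : ℤ} (ht : recNumerator M r c t ∈ I)
    (s : ℤ) : recNumerator M r c s ∈ I := by
  have hstep : ∀ s, recNumerator M r c s ∈ I ↔ recNumerator M r c (s + 1) ∈ I := fun s => by
    rw [recNumerator_eq_C_mul_add_X_mul M hrec, I.add_mem_iff_right (I.mul_mem_left _ hq)]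
    exact ⟨I.mem_of_mul_mem_of_isCoprime (isCoprime_X_recDenominator M r) hq, I.mul_mem_left X⟩
  induction s using Int.inductionOn' (b := t) with
  | zero => exact ht
  | succ s _ ih => exact (hstep s).mp ih
  | pred s _ ih => exact (hstep (s - 1)).mpr (by rwa [sub_add_cancel])

theorem X_pow_mem_of_recNumerator_mem {t : ℤ} (hH : IsUnit (hankelMatrix (M + 1) c t).det)
    {I : Ideal R[X]} (hI : ∀ i : Fin (M + 1), recNumerator (M + 1) r c (t + (i : ℕ)) ∈ I) :
    X ^ M ∈ I := by
  let v : Fin (M + 1) → R[X] := fun k => X ^ (k : ℕ) * recDenominator (M + 1 - (k + 1)) r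
  have hv : ∀ i, ((hankelMatrix (M + 1) c t).map C *ᵥ v) i ∈ I := fun i => by
    have hi := hI i
    rw [recNumerator_eq_sum, ← Fin.sum_univ_eq_sum_range] at hi
    simp only [mulVec, dotProduct, map_apply, hankelMatrix, of_apply]
    exact hi
  have hdet : IsUnit ((hankelMatrix (M + 1) c t).map C).det := by
    rw [← RingHom.mapMatrix_apply, ← RingHom.map_det]
    exact hH.map C
  simpa [v, recDenominator] using Matrix.mem_of_mulVec_mem hdet hv (Fin.last M)

theorem isCoprime_recNumerator_recDenominator
    (hrec : ∀ n : ℤ, c n = ∑ i ∈ range M, r (i + 1) * c (n - (i + 1 : ℕ)))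
    {t₀ : ℤ} (hH : IsUnit (hankelMatrix M c t₀).det) (t : ℤ) :
    IsCoprime (recNumerator M r c t) (recDenominator M r) := by
  cases M with
  | zero => simpa [recDenominator] using isCoprime_one_right
  | succ M =>
    let I := Ideal.span {recNumerator (M + 1) r c t, recDenominator (M + 1) r}
    have hq : recDenominator (M + 1) r ∈ I := Ideal.subset_span (by simp)
    have hp : recNumerator (M + 1) r c t ∈ I := Ideal.subset_span (by simp)
    have hX : X ^ M ∈ I :=
      X_pow_mem_of_recNumerator_mem hH fun i => recNumerator_mem_of_mem hrec hq hp _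
    have hone : (1 : R[X]) ∈ I :=
      I.mem_of_mul_mem_of_isCoprime (isCoprime_X_recDenominator _ r).pow_left hq (by rwa [mul_one])
    exact Ideal.mem_span_pair.mp hone

end

theorem numerator_denominator_coprime_general
    (K : Type*) [Field K]
    (M : ℕ) (r : ℕ → K) (c : ℤ → K)
    (hrec : ∀ n : ℤ, c n = ∑ i ∈ Finset.range M, r (i + 1) * c (n - (i + 1 : ℕ)))
    (p : ℤ → Polynomial K)
    (hp : ∀ t : ℤ, p t = ∑ j ∈ Finset.range M,
        C (c (t + j) - ∑ i ∈ Finset.range j, r (i + 1) * c (t + j - (i + 1 : ℕ))) * X ^ j)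
    (q : Polynomial K)
    (hq : q = 1 - ∑ i ∈ Finset.range M, C (r (i + 1)) * X ^ (i + 1))
    (t₀ : ℤ)
    (hHankel : (Matrix.of fun i j : Fin M => c (t₀ + (i : ℕ) + (j : ℕ))).det ≠ 0) :
    ∀ t : ℤ, t₀ ≤ t → IsCoprime (p t) q ∧
      ∀ α : AlgebraicClosure K, ¬ (aeval α (p t) = 0 ∧ aeval α q = 0) := by
  obtain rfl : p = recNumerator M r c := funext hp
  obtain rfl : q = recDenominator M r := hq
  intro t _
  have hcop := isCoprime_recNumerator_recDenominator hrec (isUnit_iff_ne_zero.mpr hHankel) t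
  refine ⟨hcop, fun α ⟨hpα, hqα⟩ => (not_isCoprime_zero_zero (R := AlgebraicClosure K)) ?_⟩
  simpa [hpα, hqα] using hcop.map (aeval α).toRingHom

/-- If the Hankel matrix `C_{t₀}` of a linearly recurrent sequence is nonsingular, then
for every `t ≥ t₀` the numerator `p_t` and the denominator `q` of the generating
function are coprime; in particular they have no common root in an algebraic closure. -/
theorem numerator_denominator_coprime
    (K : Type*) [Field K]
    (M : ℕ) (r : ℕ → K) (c : ℤ → K) (hrM : r M ≠ 0)
    (hrec : ∀ n : ℤ, c n = ∑ i ∈ Finset.range M, r (i + 1) * c (n - (i + 1 : ℕ)))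
    (p : ℤ → Polynomial K)
    (hp : ∀ t : ℤ, p t = ∑ j ∈ Finset.range M,
        C (c (t + j) - ∑ i ∈ Finset.range j, r (i + 1) * c (t + j - (i + 1 : ℕ))) * X ^ j)
    (q : Polynomial K)
    (hq : q = 1 - ∑ i ∈ Finset.range M, C (r (i + 1)) * X ^ (i + 1))
    (t₀ : ℤ)
    (hHankel : (Matrix.of fun i j : Fin M => c (t₀ + (i : ℕ) + (j : ℕ))).det ≠ 0) :
    ∀ t : ℤ, t₀ ≤ t → IsCoprime (p t) q ∧
      ∀ α : AlgebraicClosure K, ¬ (aeval α (p t) = 0 ∧ aeval α q = 0) :=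
  numerator_denominator_coprime_general K M r c hrec p hp q hq t₀ hHankel
end

section
/- If α ≠ 0 is a common root of q(X) = 1 - Σ_{i=1}^M r_i X^i and of p_t(X) for every t ≥ t_0 (where p_t is the numerator of the generating function of a sequence c satisfying the order-M recurrence), then the columns of the Hankel matrix C_{t_0} = (c_{t_0+i+j}) are linearly dependent, i.e., det C_{t_0} = 0. -/
/-!
The vector `v_j = a_j(α)` is a kernel vector of the Hankel matrix `C_{t₀}`: expanding
`p_t(α)` and regrouping the double sum by the index of `c` gives
`p_t(α) = ∑_j a_j(α) c_{t+j}`, so row `i` of `C_{t₀} v` is `p_{t₀+i}(α) = 0`. The vector is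
nonzero because its last entry is `a_{M-1}(α) = α^{M-1}`, and `q(α) = 0` rules out `M = 0`.
-/

open Polynomial Finset Matrix

theorem Finset.sum_range_sum_range_sub_succ {β : Type*} [AddCommMonoid β] (M : ℕ)
    (f : ℕ → ℕ → β) :
    ∑ j ∈ range M, ∑ i ∈ range j, f i (j - (i + 1)) =
      ∑ m ∈ range M, ∑ i ∈ range (M - 1 - m), f i m := by
  rw [sum_sigma', sum_sigma']
  refine sum_nbij' (fun x => ⟨x.1 - x.2 - 1, x.2⟩) (fun x => ⟨x.1 + x.2 + 1, x.2⟩)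
    ?_ ?_ ?_ ?_ ?_ <;>
  · rintro ⟨j, i⟩ hx
    simp only [mem_sigma, mem_range, Sigma.mk.inj_iff, heq_eq_eq, and_true] at hx ⊢
    first
      | omega
      | exact congrArg₂ f rfl (by omega)

section Numerator

variable {R : Type*} [CommRing R] (r : ℕ → R) (c : ℤ → R) (M : ℕ)

/-- The numerator `p_t` of the generating function of `c`. -/
noncomputable def numerator (t : ℤ) : R[X] :=
  ∑ j ∈ range M, C (c (t + j) - ∑ i ∈ range j, r (i + 1) * c (t + j - (i + 1 : ℕ))) * X ^ j

/-- `a_j(x) = x^j (1 - ∑_{i=1}^{M-j-1} r_i x^i)`. -/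
def numeratorWeight (x : R) (j : ℕ) : R :=
  x ^ j - ∑ i ∈ range (M - 1 - j), r (i + 1) * x ^ (j + i + 1)

theorem numeratorWeight_sub_one (x : R) : numeratorWeight r M x (M - 1) = x ^ (M - 1) := by
  simp [numeratorWeight]

theorem eval_numerator (t : ℤ) (x : R) :
    (numerator r c M t).eval x = ∑ j ∈ range M, c (t + j) * numeratorWeight r M x j := by
  have hregroup : ∑ j ∈ range M, (∑ i ∈ range j, r (i + 1) * c (t + j - (i + 1 : ℕ))) * x ^ j =
      ∑ m ∈ range M, c (t + m) * ∑ i ∈ range (M - 1 - m), r (i + 1) * x ^ (m + i + 1) := by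
    simp only [sum_mul, mul_sum]
    convert sum_range_sum_range_sub_succ M
      (fun i m => r (i + 1) * c (t + m) * x ^ (m + i + 1)) using 1
    · refine sum_congr rfl fun j _ => sum_congr rfl fun i hi => ?_
      rw [mem_range] at hi
      rw [show j - (i + 1) + i + 1 = j by omega,
        show t + j - (i + 1 : ℕ) = t + (j - (i + 1) : ℕ) by push_cast [Nat.cast_sub hi]; ring]
    · exact sum_congr rfl fun m _ => sum_congr rfl fun i _ => by ring
  simp only [numerator, numeratorWeight, eval_finsetSum, eval_mul, eval_C, eval_pow, eval_X,
    sub_mul, sum_sub_distrib, hregroup, mul_sub]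

def hankel (t : ℤ) : Matrix (Fin M) (Fin M) R :=
  Matrix.of fun i j : Fin M => c (t + (i : ℕ) + (j : ℕ))

theorem hankel_mulVec_numeratorWeight (t : ℤ) (x : R) (i : Fin M) :
    (hankel c M t *ᵥ fun j => numeratorWeight r M x j) i = (numerator r c M (t + i)).eval x := by
  rw [eval_numerator, ← Fin.sum_univ_eq_sum_range (fun j => c (t + i + j) * _)]
  rfl

theorem hankel_det_eq_zero_of_eval_numerator_eq_zero [IsDomain R] {x : R} (hx : x ≠ 0)
    (hM : M ≠ 0) (t : ℤ) (hroot : ∀ i < M, (numerator r c M (t + i)).eval x = 0) :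
    (hankel c M t).det = 0 := by
  refine Matrix.exists_mulVec_eq_zero_iff.mp ⟨fun j => numeratorWeight r M x j, ?_, ?_⟩
  · intro hzero
    have hlast := congrFun hzero ⟨M - 1, by omega⟩
    simp only [numeratorWeight_sub_one, Pi.zero_apply] at hlast
    exact pow_ne_zero _ hx hlast
  · ext i
    rw [hankel_mulVec_numeratorWeight]
    exact hroot i i.isLt

end Numerator

theorem common_root_implies_hankel_singular_general
    (K : Type*) [Field K]
    (M : ℕ) (r : ℕ → K) (c : ℤ → K)
    (p : ℤ → Polynomial K)
    (hp : ∀ t : ℤ, p t = ∑ j ∈ Finset.range M,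
        C (c (t + j) - ∑ i ∈ Finset.range j, r (i + 1) * c (t + j - (i + 1 : ℕ))) * X ^ j)
    (q : Polynomial K)
    (hq : q = 1 - ∑ i ∈ Finset.range M, C (r (i + 1)) * X ^ (i + 1))
    (α : K) (hα : α ≠ 0) (hqα : q.eval α = 0)
    (t₀ : ℤ) (hpα : ∀ t : ℤ, t₀ ≤ t → (p t).eval α = 0) :
    (Matrix.of fun i j : Fin M => c (t₀ + (i : ℕ) + (j : ℕ))).det = 0 := by
  have hM : M ≠ 0 := by
    rintro rfl
    simp [hq] at hqα
  refine hankel_det_eq_zero_of_eval_numerator_eq_zero r c M hα hM t₀ fun i _ => ?_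
  rw [numerator, ← hp]
  exact hpα _ (by omega)

/-- If `α ≠ 0` is a common root of `q` and of `p_t` for every `t ≥ t₀`, then the
Hankel matrix `C_{t₀}` is singular: `det C_{t₀} = 0`. -/
theorem common_root_implies_hankel_singular
    (K : Type*) [Field K]
    (M : ℕ) (r : ℕ → K) (c : ℤ → K) (hrM : r M ≠ 0)
    (hrec : ∀ n : ℤ, c n = ∑ i ∈ Finset.range M, r (i + 1) * c (n - (i + 1 : ℕ)))
    (p : ℤ → Polynomial K)
    (hp : ∀ t : ℤ, p t = ∑ j ∈ Finset.range M,
        C (c (t + j) - ∑ i ∈ Finset.range j, r (i + 1) * c (t + j - (i + 1 : ℕ))) * X ^ j)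
    (q : Polynomial K)
    (hq : q = 1 - ∑ i ∈ Finset.range M, C (r (i + 1)) * X ^ (i + 1))
    (α : K) (hα : α ≠ 0) (hqα : q.eval α = 0)
    (t₀ : ℤ) (hpα : ∀ t : ℤ, t₀ ≤ t → (p t).eval α = 0) :
    (Matrix.of fun i j : Fin M => c (t₀ + (i : ℕ) + (j : ℕ))).det = 0 :=
  common_root_implies_hankel_singular_general K M r c p hp q hq α hα hqα t₀ hpα
end
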